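/- Let 𝔉 be a maximal commuting family of i-boxes in [a,b], let j ∈ I, and let [x,y] ∈ 𝔉 have effective end x. If [x(j)⁺, y'] ∈ 𝔉 for some y', then for every y'' with i_{y''} = j and y' < y'' < y, the box [x(j)⁺, y''] belongs to 𝔉 and has effective end y''. -/
import Mathlib


namespace IBoxes

variable {I : Type*}

/-- `gapBelow i x m` encodes `x₋ < m` : no position `t` with `m ≤ t < x` has the color of `x`. -/
def gapBelow (i : ℤ → I) (x m : ℤ) : Prop := ∀ t : ℤ, m ≤ t → t < x → i t ≠ i x

/-- `gapAbove i y m` encodes `m < y₊` : no position `t` with `y < t ≤ m` has the color of `y`. -/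
def gapAbove (i : ℤ → I) (y m : ℤ) : Prop := ∀ t : ℤ, y < t → t ≤ m → i t ≠ i y

/-- `[x,y]` is an `i`-box. -/
def IsBox (i : ℤ → I) (x y : ℤ) : Prop := x ≤ y ∧ i x = i y

/-- Two `i`-boxes commute: `(x₁)₋ < x₂ ≤ y₂ < (y₁)₊` or `(x₂)₋ < x₁ ≤ y₁ < (y₂)₊`. -/
def BoxCommute (i : ℤ → I) (x₁ y₁ x₂ y₂ : ℤ) : Prop :=
  (gapBelow i x₁ x₂ ∧ gapAbove i y₁ y₂) ∨ (gapBelow i x₂ x₁ ∧ gapAbove i y₂ y₁)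

/-- A commuting family of `i`-boxes. -/
def CommFamily (i : ℤ → I) (F : Set (ℤ × ℤ)) : Prop :=
  (∀ p ∈ F, IsBox i p.1 p.2) ∧ ∀ p ∈ F, ∀ q ∈ F, BoxCommute i p.1 p.2 q.1 q.2

/-- All boxes of the family lie in `[a,b]`. -/
def InRange (a b : ℤ) (F : Set (ℤ × ℤ)) : Prop := ∀ p ∈ F, a ≤ p.1 ∧ p.2 ≤ b

/-- A maximal commuting family of `i`-boxes in `[a,b]`. -/
def MaxCommFamily (i : ℤ → I) (a b : ℤ) (F : Set (ℤ × ℤ)) : Prop :=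
  CommFamily i F ∧ InRange a b F ∧
    ∀ G : Set (ℤ × ℤ), CommFamily i G → InRange a b G → F ⊆ G → F = G

/-- `x' = x₊`, the next position with the color of `x`. -/
def NextSame (i : ℤ → I) (x x' : ℤ) : Prop :=
  x < x' ∧ i x' = i x ∧ ∀ t : ℤ, x < t → t < x' → i t ≠ i x

/-- `y' = y₋`, the previous position with the color of `y`. -/
def PrevSame (i : ℤ → I) (y y' : ℤ) : Prop :=
  y' < y ∧ i y' = i y ∧ ∀ t : ℤ, y' < t → t < y → i t ≠ i y

/-- `p` is frozen in `[a,b]` : `(p.1)₋ < a` and `b < (p.2)₊`. -/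
def Frozen (i : ℤ → I) (a b : ℤ) (p : ℤ × ℤ) : Prop :=
  gapBelow i p.1 a ∧ gapAbove i p.2 b

/-- `p = [lo, hi}`, i.e. `p = [lo, hi(i lo)⁻]`. -/
def IsLBox (i : ℤ → I) (lo hi : ℤ) (p : ℤ × ℤ) : Prop :=
  p.1 = lo ∧ lo ≤ p.2 ∧ p.2 ≤ hi ∧ i p.2 = i lo ∧ ∀ t : ℤ, p.2 < t → t ≤ hi → i t ≠ i lo

/-- `p = {lo, hi]`, i.e. `p = [lo(i hi)⁺, hi]`. -/
def IsRBox (i : ℤ → I) (lo hi : ℤ) (p : ℤ × ℤ) : Prop :=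
  p.2 = hi ∧ lo ≤ p.1 ∧ p.1 ≤ hi ∧ i p.1 = i hi ∧ ∀ t : ℤ, lo ≤ t → t < p.1 → i t ≠ i hi

/-- An admissible chain of `i`-boxes `𝔠_k = box k` (for `1 ≤ k ≤ l`) with envelopes
`𝔠̃_k = [lo k, hi k]`. -/
structure AdmissibleChain (i : ℤ → I) (l : ℕ) where
  lo : ℕ → ℤ
  hi : ℕ → ℤ
  box : ℕ → ℤ × ℤ
  size : ∀ k : ℕ, 1 ≤ k → k ≤ l → hi k = lo k + (k : ℤ) - 1
  step : ∀ k : ℕ, 1 ≤ k → k < l →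
    (lo (k + 1) = lo k - 1 ∧ hi (k + 1) = hi k) ∨
    (lo (k + 1) = lo k ∧ hi (k + 1) = hi k + 1)
  box_spec : ∀ k : ℕ, 1 ≤ k → k ≤ l →
    IsLBox i (lo k) (hi k) (box k) ∨ IsRBox i (lo k) (hi k) (box k)
  cover : ∀ k : ℕ, 1 ≤ k → k ≤ l →
    Set.Icc (lo k) (hi k) = ⋃ j ∈ Set.Icc 1 k, Set.Icc ((box j).1) ((box j).2)

/-- The set of boxes appearing in an admissible chain. -/
def boxesOf {i : ℤ → I} {l : ℕ} (C : AdmissibleChain i l) : Set (ℤ × ℤ) :=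
  {p | ∃ k : ℕ, 1 ≤ k ∧ k ≤ l ∧ C.box k = p}

/-- The envelope `𝔠̃_k` as a set, with `𝔠̃_0 = ∅`. -/
def env {i : ℤ → I} {l : ℕ} (C : AdmissibleChain i l) (k : ℕ) : Set ℤ :=
  if k = 0 then ∅ else Set.Icc (C.lo k) (C.hi k)

/-- `z` is the effective end of the box `(x,y)` of the maximal commuting family `F` in `[a,b]`. -/
def IsEffectiveEnd (i : ℤ → I) (a b : ℤ) (F : Set (ℤ × ℤ)) (x y z : ℤ) : Prop :=
  z ∈ ({x, y} : Set ℤ) ∧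
    ∀ (l : ℕ) (C : AdmissibleChain i l), C.lo l = a → C.hi l = b → boxesOf C = F →
      ∀ k : ℕ, 1 ≤ k → k ≤ l → C.box k = (x, y) →
        ({z} : Set ℤ) = env C k \ env C (k - 1)

/-- `[x,y]` is in the left corner of `F`: `[x₊,y] ∈ F` and `[x,y₊] ∈ F`. -/
def LeftCorner (i : ℤ → I) (F : Set (ℤ × ℤ)) (x y : ℤ) : Prop :=
  (∃ x', NextSame i x x' ∧ (x', y) ∈ F) ∧ (∃ y', NextSame i y y' ∧ (x, y') ∈ F)

/-- `[x,y]` is in the right corner of `F`: `[x,y₋] ∈ F` and `[x₋,y] ∈ F`. -/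
def RightCorner (i : ℤ → I) (F : Set (ℤ × ℤ)) (x y : ℤ) : Prop :=
  (∃ y', PrevSame i y y' ∧ (x, y') ∈ F) ∧ (∃ x', PrevSame i x x' ∧ (x', y) ∈ F)

/-- The number of positions of color `j` in `[x,y]`. -/
noncomputable def colorCount (i : ℤ → I) (j : I) (x y : ℤ) : ℕ :=
  {s : ℤ | x ≤ s ∧ s ≤ y ∧ i s = j}.ncard


/-! ### Auxiliary lemmas -/

lemma boxCommute_symm {i : ℤ → I} {x₁ y₁ x₂ y₂ : ℤ} (h : BoxCommute i x₁ y₁ x₂ y₂) :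
    BoxCommute i x₂ y₂ x₁ y₁ := h.symm

lemma mem_of_commutes {i : ℤ → I} {a b : ℤ} {F : Set (ℤ × ℤ)} (hF : MaxCommFamily i a b F)
    (p : ℤ × ℤ) (hbp : IsBox i p.1 p.2) (hr1 : a ≤ p.1) (hr2 : p.2 ≤ b)
    (hcomm : ∀ q : ℤ × ℤ, IsBox i q.1 q.2 → a ≤ q.1 → q.2 ≤ b →
      BoxCommute i p.1 p.2 q.1 q.2) : p ∈ F := by
  have hG := hF.2.2 (insert p F) ?_ ?_ (Set.subset_insert _ _)
  · rw [hG]; exact Set.mem_insert _ _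
  · constructor
    · rintro q (rfl | hq)
      · exact hbp
      · exact hF.1.1 q hq
    · intro q hq r hr
      have hr' : IsBox i r.1 r.2 ∧ a ≤ r.1 ∧ r.2 ≤ b := by
        rcases hr with rfl | hr
        · exact ⟨hbp, hr1, hr2⟩
        · exact ⟨hF.1.1 r hr, (hF.2.1 r hr).1, (hF.2.1 r hr).2⟩
      have hq' : IsBox i q.1 q.2 ∧ a ≤ q.1 ∧ q.2 ≤ b := by
        rcases hq with rfl | hq
        · exact ⟨hbp, hr1, hr2⟩
        · exact ⟨hF.1.1 q hq, (hF.2.1 q hq).1, (hF.2.1 q hq).2⟩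
      rcases hq with rfl | hq
      · exact hcomm r hr'.1 hr'.2.1 hr'.2.2
      · rcases hr with rfl | hr
        · exact boxCommute_symm (hcomm q hq'.1 hq'.2.1 hq'.2.2)
        · exact hF.1.2 q hq r hr
  · rintro q (rfl | hq)
    · exact ⟨hr1, hr2⟩
    · exact hF.2.1 q hq

section ChainLemmas

variable {i : ℤ → I} {l : ℕ} (C : AdmissibleChain i l)

lemma chain_mono {k k' : ℕ} (h1 : 1 ≤ k) (h2 : k ≤ k') (h3 : k' ≤ l) :
    C.lo k' ≤ C.lo k ∧ C.hi k ≤ C.hi k' := by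
  induction k', h2 using Nat.le_induction with
  | base => exact ⟨le_rfl, le_rfl⟩
  | succ d hd ih =>
    have ih' := ih (by omega)
    rcases C.step d (by omega) (by omega) with ⟨h, h'⟩ | ⟨h, h'⟩ <;>
      exact ⟨by omega, by omega⟩

lemma env_eq {k : ℕ} (hk : k ≠ 0) : env C k = Set.Icc (C.lo k) (C.hi k) := if_neg hk

lemma box_mem {k : ℕ} (h1 : 1 ≤ k) (h2 : k ≤ l) :
    C.lo k ≤ (C.box k).1 ∧ (C.box k).1 ≤ (C.box k).2 ∧ (C.box k).2 ≤ C.hi k := by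
  rcases C.box_spec k h1 h2 with hL | hR
  · exact ⟨le_of_eq hL.1.symm, hL.1 ▸ hL.2.1, hL.2.2.1⟩
  · exact ⟨hR.2.1, hR.1 ▸ hR.2.2.1, le_of_eq hR.1⟩

lemma box_in_env {k : ℕ} (h1 : 1 ≤ k) (h2 : k ≤ l) :
    Set.Icc (C.box k).1 (C.box k).2 ⊆ env C k := by
  rw [env_eq C (by omega)]
  exact Set.Icc_subset_Icc (box_mem C h1 h2).1 (box_mem C h1 h2).2.2

lemma env_mono {k k' : ℕ} (h : k ≤ k') (h2 : k' ≤ l) : env C k ⊆ env C k' := by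
  rcases Nat.eq_zero_or_pos k with rfl | hk
  · simp [env]
  · rw [env_eq C (by omega), env_eq C (by omega)]
    exact Set.Icc_subset_Icc (chain_mono C (by omega) h h2).1 (chain_mono C (by omega) h h2).2

lemma diff_sub_box {k : ℕ} (h1 : 1 ≤ k) (h2 : k ≤ l) :
    env C k \ env C (k - 1) ⊆ Set.Icc (C.box k).1 (C.box k).2 := by
  rintro t ⟨htk, htk1⟩
  rw [env_eq C (by omega), C.cover k h1 h2] at htk
  simp only [Set.mem_iUnion, exists_prop, Set.mem_Icc] at htk
  obtain ⟨m, hm, ht⟩ := htk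
  by_cases hmk : m = k
  · exact hmk ▸ ht
  · exfalso
    have hk2 : 2 ≤ k := by
      rcases Nat.lt_or_ge k 2 with h | h
      · interval_cases k
        · omega
      · exact h
    apply htk1
    rw [env_eq C (by omega), C.cover (k-1) (by omega) (by omega)]
    simp only [Set.mem_iUnion, exists_prop, Set.mem_Icc]
    exact ⟨m, ⟨hm.1, by omega⟩, ht⟩

lemma step_diff {k : ℕ} (hk : 2 ≤ k) (h2 : k ≤ l) :
    (C.lo k = C.lo (k-1) - 1 ∧ C.hi k = C.hi (k-1) ∧
      env C k \ env C (k-1) = {C.lo k}) ∨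
    (C.lo k = C.lo (k-1) ∧ C.hi k = C.hi (k-1) + 1 ∧
      env C k \ env C (k-1) = {C.hi k}) := by
  have hs := C.step (k-1) (by omega) (by omega)
  rw [show k - 1 + 1 = k from by omega] at hs
  have hsz := C.size k (by omega) h2
  have hsz' := C.size (k-1) (by omega) (by omega)
  rw [env_eq C (by omega), env_eq C (by omega)]
  rcases hs with ⟨h, h'⟩ | ⟨h, h'⟩
  · left
    refine ⟨by omega, h', ?_⟩
    ext t
    simp only [Set.mem_diff, Set.mem_Icc, Set.mem_singleton_iff, not_and, not_le]
    omega
  · right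
    refine ⟨h, by omega, ?_⟩
    ext t
    simp only [Set.mem_diff, Set.mem_Icc, Set.mem_singleton_iff, not_and, not_le]
    omega

lemma newpt {k : ℕ} (h1 : 1 ≤ k) (h2 : k ≤ l) :
    env C k \ env C (k-1) = {(C.box k).1} ∨ env C k \ env C (k-1) = {(C.box k).2} := by
  rcases Nat.lt_or_ge k 2 with hk | hk
  · -- k = 1
    have hk1 : k = 1 := by omega
    subst hk1
    have hsz := C.size 1 le_rfl h2
    have hbm := box_mem C le_rfl h2
    have henv : env C 1 = Set.Icc (C.lo 1) (C.hi 1) := env_eq C one_ne_zero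
    have hb1 : (C.box 1).1 = C.lo 1 := by
      have := box_in_env C le_rfl h2 (Set.mem_Icc.mpr ⟨le_rfl, hbm.2.1⟩)
      rw [henv, Set.mem_Icc] at this
      omega
    left
    have h0 : env C 0 = (∅ : Set ℤ) := if_pos rfl
    rw [show (1:ℕ) - 1 = 0 from rfl, h0, Set.diff_empty, henv, hb1]
    ext t
    simp only [Set.mem_Icc, Set.mem_singleton_iff]
    omega
  · have hbm := box_mem C h1 h2
    rcases step_diff C hk h2 with ⟨_, _, hd⟩ | ⟨_, _, hd⟩
    · left
      have hin : C.lo k ∈ Set.Icc (C.box k).1 (C.box k).2 :=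
        diff_sub_box C h1 h2 (hd ▸ rfl)
      rw [Set.mem_Icc] at hin
      rw [hd]
      congr 1
      omega
    · right
      have hin : C.hi k ∈ Set.Icc (C.box k).1 (C.box k).2 :=
        diff_sub_box C h1 h2 (hd ▸ rfl)
      rw [Set.mem_Icc] at hin
      rw [hd]
      congr 1
      omega

lemma eff_lo {k : ℕ} (hk1 : 1 ≤ k) (hk2 : k ≤ l) {x y : ℤ} (hbk : C.box k = (x, y))
    (hlt : x < y) (hD : ({x} : Set ℤ) = env C k \ env C (k-1)) :
    C.lo k = x ∧ y ≤ C.hi k := by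
  have hbm := box_mem C hk1 hk2
  rw [hbk] at hbm
  refine ⟨?_, hbm.2.2⟩
  have hk : 2 ≤ k := by
    by_contra h
    have hk1' : k = 1 := by omega
    subst hk1'
    have hsz := C.size 1 le_rfl hk2
    simp only at hbm
    omega
  rcases step_diff C hk hk2 with ⟨_, _, hd⟩ | ⟨_, hhi, hd⟩
  · have : x = C.lo k := by
      rw [hd] at hD
      exact Set.singleton_eq_singleton_iff.mp hD
    omega
  · exfalso
    have : x = C.hi k := by
      rw [hd] at hD
      exact Set.singleton_eq_singleton_iff.mp hD
    simp only at hbm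
    omega

end ChainLemmas

lemma chain_one (i : ℤ → I) (a : ℤ) :
    ∃ C : AdmissibleChain i 1, C.lo 1 = a ∧ C.hi 1 = a ∧ boxesOf C = {((a : ℤ), a)} := by
  refine ⟨⟨fun _ => a, fun _ => a, fun _ => (a, a), ?_, ?_, ?_, ?_⟩, rfl, rfl, ?_⟩
  · intro k h1 h2
    have : k = 1 := by omega
    subst this
    push_cast
    ring
  · intro k h1 h2; omega
  · intro k h1 h2
    exact Or.inl ⟨rfl, le_rfl, le_rfl, rfl, fun t ht1 ht2 => absurd (ht1.trans_le ht2) (lt_irrefl a)⟩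
  · intro k h1 h2
    have : k = 1 := by omega
    subst this
    ext t
    simp
  · ext p
    simp only [boxesOf, Set.mem_setOf_eq, Set.mem_singleton_iff]
    constructor
    · rintro ⟨k, _, _, rfl⟩; rfl
    · rintro rfl; exact ⟨1, le_rfl, le_rfl, rfl⟩

lemma chain_extend {i : ℤ → I} {l : ℕ} (C : AdmissibleChain i l) (hl : 1 ≤ l)
    {a b a' b' : ℤ} (hlo : C.lo l = a') (hhi : C.hi l = b')
    (hs : (a' = a + 1 ∧ b' = b) ∨ (a' = a ∧ b' = b - 1))
    (nb : ℤ × ℤ) (hspec : IsLBox i a b nb ∨ IsRBox i a b nb)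
    (h1 : a ≤ nb.1) (h3 : nb.2 ≤ b)
    (hcov : ∀ t : ℤ, a ≤ t → t ≤ b → (a' ≤ t ∧ t ≤ b') ∨ (nb.1 ≤ t ∧ t ≤ nb.2)) :
    ∃ C' : AdmissibleChain i (l+1), C'.lo (l+1) = a ∧ C'.hi (l+1) = b ∧
      boxesOf C' = insert nb (boxesOf C) := by
  have hsz := C.size l hl le_rfl
  refine ⟨⟨Function.update C.lo (l+1) a, Function.update C.hi (l+1) b,
    Function.update C.box (l+1) nb, ?_, ?_, ?_, ?_⟩,
    Function.update_self _ _ _, Function.update_self _ _ _, ?_⟩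
  · intro k hk1 hk2
    by_cases hk : k = l + 1
    · subst hk
      rw [Function.update_self, Function.update_self]
      push_cast
      omega
    · rw [Function.update_of_ne hk, Function.update_of_ne hk]
      exact C.size k hk1 (by omega)
  · intro k hk1 hk2
    by_cases hk : k = l
    · subst hk
      rw [Function.update_self, Function.update_self,
        Function.update_of_ne (by omega : k ≠ k + 1),
        Function.update_of_ne (by omega : k ≠ k + 1), hlo, hhi]
      rcases hs with ⟨h, h'⟩ | ⟨h, h'⟩
      · exact Or.inl ⟨by omega, by omega⟩
      · exact Or.inr ⟨by omega, by omega⟩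
    · rw [Function.update_of_ne (by omega : k + 1 ≠ l + 1),
        Function.update_of_ne (by omega : k + 1 ≠ l + 1),
        Function.update_of_ne (by omega : k ≠ l + 1),
        Function.update_of_ne (by omega : k ≠ l + 1)]
      exact C.step k hk1 (by omega)
  · intro k hk1 hk2
    by_cases hk : k = l + 1
    · subst hk
      rw [Function.update_self, Function.update_self, Function.update_self]
      exact hspec
    · rw [Function.update_of_ne hk, Function.update_of_ne hk, Function.update_of_ne hk]
      exact C.box_spec k hk1 (by omega)
  · intro k hk1 hk2
    by_cases hk : k = l + 1
    · subst hk
      rw [Function.update_self, Function.update_self]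
      ext t
      simp only [Set.mem_Icc, Set.mem_iUnion, exists_prop]
      constructor
      · rintro ⟨ht1, ht2⟩
        rcases hcov t ht1 ht2 with ⟨hc1, hc2⟩ | ⟨hc1, hc2⟩
        · have hmem : t ∈ Set.Icc (C.lo l) (C.hi l) := by
            rw [hlo, hhi]; exact Set.mem_Icc.mpr ⟨hc1, hc2⟩
          rw [C.cover l hl le_rfl] at hmem
          simp only [Set.mem_iUnion, exists_prop, Set.mem_Icc] at hmem
          obtain ⟨m, hm, htm⟩ := hmem
          refine ⟨m, ⟨hm.1, by omega⟩, ?_⟩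
          rw [Function.update_of_ne (by omega : m ≠ l + 1)]
          exact Set.mem_Icc.mpr htm
        · refine ⟨l + 1, ⟨by omega, le_rfl⟩, ?_⟩
          rw [Function.update_self]
          exact Set.mem_Icc.mpr ⟨hc1, hc2⟩
      · rintro ⟨m, hm, htm⟩
        by_cases hml : m = l + 1
        · subst hml
          rw [Function.update_self] at htm
          exact ⟨by omega, by omega⟩
        · rw [Function.update_of_ne hml] at htm
          have hmem : t ∈ Set.Icc (C.lo l) (C.hi l) := by
            rw [C.cover l hl le_rfl]
            simp only [Set.mem_iUnion, exists_prop]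
            exact ⟨m, ⟨hm.1, by omega⟩, htm⟩
          rw [hlo, hhi, Set.mem_Icc] at hmem
          rcases hs with ⟨h, h'⟩ | ⟨h, h'⟩ <;> constructor <;> omega
    · have hkl : k ≤ l := by omega
      rw [Function.update_of_ne hk, Function.update_of_ne hk, C.cover k hk1 hkl]
      apply Set.iUnion₂_congr
      intro m hm
      rw [Function.update_of_ne (by rw [Set.mem_Icc] at hm; omega : m ≠ l + 1)]
  · ext p
    simp only [boxesOf, Set.mem_setOf_eq, Set.mem_insert_iff]
    constructor
    · rintro ⟨k, hk1, hk2, hbk⟩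
      by_cases hk : k = l + 1
      · subst hk
        rw [Function.update_self] at hbk
        exact Or.inl hbk.symm
      · rw [Function.update_of_ne hk] at hbk
        exact Or.inr ⟨k, hk1, by omega, hbk⟩
    · rintro (rfl | ⟨k, hk1, hk2, hbk⟩)
      · exact ⟨l + 1, by omega, le_rfl, Function.update_self _ _ _⟩
      · refine ⟨k, hk1, by omega, ?_⟩
        rw [Function.update_of_ne (by omega : k ≠ l + 1)]
        exact hbk

lemma exists_chain_aux {i : ℤ → I} (n : ℕ) : ∀ a b : ℤ, (b - a).toNat = n → a ≤ b →
    ∀ F : Set (ℤ × ℤ), MaxCommFamily i a b F →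
    ∃ (l : ℕ) (C : AdmissibleChain i l), 1 ≤ l ∧ C.lo l = a ∧ C.hi l = b ∧ boxesOf C = F := by
  induction n using Nat.strong_induction_on with
  | _ n IH =>
    intro a b hn hab F hF
    rcases eq_or_lt_of_le hab with rfl | hlt
    · -- base case a = b
      have hmem : (a, a) ∈ F := by
        apply mem_of_commutes hF (a, a) ⟨le_rfl, rfl⟩ le_rfl le_rfl
        intro q hq hq1 hq2
        have hq11 : q.1 = a := le_antisymm (hq.1.trans hq2) hq1
        have hq22 : q.2 = a := le_antisymm hq2 (hq1.trans hq.1)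
        rw [hq11, hq22]
        exact Or.inl ⟨fun t ht1 ht2 => absurd (ht1.trans_lt ht2) (lt_irrefl a),
          fun t ht1 ht2 => absurd (ht1.trans_le ht2) (lt_irrefl a)⟩
      have hFeq : F = {(a, a)} := by
        apply Set.Subset.antisymm
        · intro p hp
          have hr := hF.2.1 p hp
          have hb := hF.1.1 p hp
          have : p = (a, a) := by
            have := hb.1
            exact Prod.ext (by omega) (by omega)
          exact this ▸ rfl
        · exact Set.singleton_subset_iff.mpr hmem
      obtain ⟨C, h1, h2, h3⟩ := chain_one i a
      exact ⟨1, C, le_rfl, h1, h2, h3.trans hFeq.symm⟩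
    · -- a < b
      obtain ⟨la, ⟨hla1, hla2, hla3⟩, hlaMax⟩ :=
        Int.exists_greatest_of_bdd (P := fun t => a ≤ t ∧ t ≤ b ∧ i t = i a)
          ⟨b, fun z hz => hz.2.1⟩ ⟨a, le_rfl, hab, rfl⟩
      obtain ⟨rb, ⟨hrb1, hrb2, hrb3⟩, hrbMin⟩ :=
        Int.exists_least_of_bdd (P := fun t => a ≤ t ∧ t ≤ b ∧ i t = i b)
          ⟨a, fun z hz => hz.1⟩ ⟨b, hab, le_rfl, rfl⟩
      have hLcomm : ∀ u v : ℤ, a ≤ u → v ≤ b → BoxCommute i a la u v := by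
        intro u v hu hv
        refine Or.inl ⟨fun t ht1 ht2 => absurd ((hu.trans ht1).trans_lt ht2) (lt_irrefl a),
          fun t ht1 ht2 => ?_⟩
        rw [hla3]
        intro hc
        exact absurd (hlaMax t ⟨hla1.trans ht1.le, ht2.trans hv, hc⟩) (not_le.mpr ht1)
      have hRcomm : ∀ u v : ℤ, a ≤ u → v ≤ b → BoxCommute i rb b u v := by
        intro u v hu hv
        refine Or.inl ⟨fun t ht1 ht2 => ?_,
          fun t ht1 ht2 => absurd (ht1.trans_le (ht2.trans hv)) (lt_irrefl b)⟩
        rw [hrb3]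
        intro hc
        exact absurd (hrbMin t ⟨hu.trans ht1, (ht2.le.trans hrb2), hc⟩) (not_le.mpr ht2)
      have hLF : (a, la) ∈ F :=
        mem_of_commutes hF (a, la) ⟨hla1, hla3.symm⟩ le_rfl hla2
          (fun q hq hq1 hq2 => hLcomm q.1 q.2 hq1 hq2)
      have hRF : (rb, b) ∈ F :=
        mem_of_commutes hF (rb, b) ⟨hrb2, hrb3⟩ hrb1 le_rfl
          (fun q hq hq1 hq2 => hRcomm q.1 q.2 hq1 hq2)
      by_cases hA : ∀ p ∈ F, p.1 = a → p = (a, la)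
      · -- shrink left
        set F' := F \ {(a, la)} with hF'def
        have hrange' : InRange (a+1) b F' := by
          intro p hp
          refine ⟨?_, (hF.2.1 p hp.1).2⟩
          have ha1 : a ≤ p.1 := (hF.2.1 p hp.1).1
          rcases eq_or_lt_of_le ha1 with heq | h
          · exact absurd (hA p hp.1 heq.symm) hp.2
          · omega
        have hmax' : MaxCommFamily i (a+1) b F' := by
          refine ⟨⟨fun p hp => hF.1.1 p hp.1, fun p hp q hq => hF.1.2 p hp.1 q hq.1⟩,
            hrange', ?_⟩
          intro G hGc hGr hGsub
          have hH : F = insert (a, la) G := by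
            apply hF.2.2
            · constructor
              · rintro q (rfl | hq)
                · exact ⟨hla1, hla3.symm⟩
                · exact hGc.1 q hq
              · rintro q (rfl | hq) r (rfl | hr)
                · exact hLcomm a la le_rfl hla2
                · exact hLcomm r.1 r.2 (by have := (hGr r hr).1; omega) (hGr r hr).2
                · exact boxCommute_symm
                    (hLcomm q.1 q.2 (by have := (hGr q hq).1; omega) (hGr q hq).2)
                · exact hGc.2 q hq r hr
            · rintro q (rfl | hq)
              · exact ⟨le_rfl, hla2⟩
              · exact ⟨by have := (hGr q hq).1; omega, (hGr q hq).2⟩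
            · intro p hp
              by_cases hpL : p = (a, la)
              · exact hpL ▸ Set.mem_insert _ _
              · exact Set.mem_insert_of_mem _ (hGsub ⟨hp, hpL⟩)
          apply Set.Subset.antisymm hGsub
          intro p hp
          have hpF : p ∈ F := hH ▸ Set.mem_insert_of_mem _ hp
          refine ⟨hpF, ?_⟩
          intro hpeq
          have := (hGr p hp).1
          rw [hpeq] at this
          omega
        obtain ⟨l, C, hl, hlo, hhi, hbx⟩ :=
          IH ((b - (a+1)).toNat) (by omega) (a+1) b rfl (by omega) F' hmax'
        obtain ⟨C', hlo', hhi', hbx'⟩ := chain_extend C hl hlo hhi (Or.inl ⟨rfl, rfl⟩)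
          (a, la) (Or.inl ⟨rfl, hla1, hla2, hla3, fun t ht1 ht2 hc =>
            absurd (hlaMax t ⟨hla1.trans ht1.le, ht2, hc⟩) (not_le.mpr ht1)⟩)
          le_rfl hla2
          (fun t ht1 ht2 => by
            rcases eq_or_lt_of_le ht1 with heq | h
            · exact Or.inr ⟨heq.le, heq ▸ hla1⟩
            · exact Or.inl ⟨by omega, ht2⟩)
        refine ⟨l + 1, C', by omega, hlo', hhi', ?_⟩
        rw [hbx', hbx, hF'def, Set.insert_diff_singleton, Set.insert_eq_self.mpr hLF]
      · -- shrink right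
        push_neg at hA
        obtain ⟨p, hpF, hp1, hpne⟩ := hA
        have hpbox := hF.1.1 p hpF
        have hpv : p.2 < la := by
          have h1 : i p.2 = i a := by rw [← hpbox.2, hp1]
          have h2 : p.2 ≤ la := hlaMax p.2 ⟨hp1 ▸ hpbox.1, (hF.2.1 p hpF).2, h1⟩
          rcases eq_or_lt_of_le h2 with heq | h
          · exact absurd (Prod.ext hp1 heq) hpne
          · exact h
        have hB : ∀ q ∈ F, q.2 = b → q = (rb, b) := by
          intro q hq hq2
          have hqbox := hF.1.1 q hq
          have hq1c : i q.1 = i b := by rw [hqbox.2, hq2]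
          have hq1 : rb ≤ q.1 := hrbMin q.1 ⟨(hF.2.1 q hq).1, hqbox.1.trans (hq2.le), hq1c⟩
          rcases eq_or_lt_of_le hq1 with heq | h
          · exact Prod.ext heq.symm hq2
          · exfalso
            have hcomm := hF.1.2 p hpF q hq
            rw [hp1, hq2] at hcomm
            rcases hcomm with ⟨hbl, hga⟩ | ⟨hbl, hga⟩
            · have hpc : i p.2 = i a := by rw [← hpbox.2, hp1]
              exact hga la hpv hla2 (by rw [hla3, hpc])
            · exact hbl rb hrb1 h (by rw [hq1c, hrb3])
        set F' := F \ {(rb, b)} with hF'def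
        have hrange' : InRange a (b-1) F' := by
          intro q hq
          refine ⟨(hF.2.1 q hq.1).1, ?_⟩
          have hb2 : q.2 ≤ b := (hF.2.1 q hq.1).2
          rcases eq_or_lt_of_le hb2 with heq | h
          · exact absurd (hB q hq.1 heq) hq.2
          · omega
        have hmax' : MaxCommFamily i a (b-1) F' := by
          refine ⟨⟨fun q hq => hF.1.1 q hq.1, fun q hq r hr => hF.1.2 q hq.1 r hr.1⟩,
            hrange', ?_⟩
          intro G hGc hGr hGsub
          have hH : F = insert (rb, b) G := by
            apply hF.2.2
            · constructor
              · rintro q (rfl | hq)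
                · exact ⟨hrb2, hrb3⟩
                · exact hGc.1 q hq
              · rintro q (rfl | hq) r (rfl | hr)
                · exact hRcomm rb b hrb1 le_rfl
                · exact hRcomm r.1 r.2 (hGr r hr).1 (by have := (hGr r hr).2; omega)
                · exact boxCommute_symm
                    (hRcomm q.1 q.2 (hGr q hq).1 (by have := (hGr q hq).2; omega))
                · exact hGc.2 q hq r hr
            · rintro q (rfl | hq)
              · exact ⟨hrb1, le_rfl⟩
              · exact ⟨(hGr q hq).1, by have := (hGr q hq).2; omega⟩
            · intro q hq
              by_cases hqR : q = (rb, b)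
              · exact hqR ▸ Set.mem_insert _ _
              · exact Set.mem_insert_of_mem _ (hGsub ⟨hq, hqR⟩)
          apply Set.Subset.antisymm hGsub
          intro q hq
          have hqF : q ∈ F := hH ▸ Set.mem_insert_of_mem _ hq
          refine ⟨hqF, ?_⟩
          intro hqeq
          have := (hGr q hq).2
          rw [hqeq] at this
          omega
        obtain ⟨l, C, hl, hlo, hhi, hbx⟩ :=
          IH ((b - 1 - a).toNat) (by omega) a (b-1) rfl (by omega) F' hmax'
        obtain ⟨C', hlo', hhi', hbx'⟩ := chain_extend C hl hlo hhi (Or.inr ⟨rfl, rfl⟩)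
          (rb, b) (Or.inr ⟨rfl, hrb1, hrb2, hrb3, fun t ht1 ht2 hc =>
            absurd (hrbMin t ⟨ht1, by omega, hc⟩) (not_le.mpr ht2)⟩)
          hrb1 le_rfl
          (fun t ht1 ht2 => by
            rcases eq_or_lt_of_le ht2 with heq | h
            · exact Or.inr ⟨heq ▸ hrb2, heq.le⟩
            · exact Or.inl ⟨ht1, by omega⟩)
        refine ⟨l + 1, C', by omega, hlo', hhi', ?_⟩
        rw [hbx', hbx, hF'def, Set.insert_diff_singleton, Set.insert_eq_self.mpr hRF]

lemma exists_chain {i : ℤ → I} {a b : ℤ} (hab : a ≤ b) {F : Set (ℤ × ℤ)}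
    (hF : MaxCommFamily i a b F) :
    ∃ (l : ℕ) (C : AdmissibleChain i l), 1 ≤ l ∧ C.lo l = a ∧ C.hi l = b ∧ boxesOf C = F :=
  exists_chain_aux (b - a).toNat a b rfl hab F hF

lemma bad_box {i : ℤ → I} {a b : ℤ} (hab : a ≤ b) {F : Set (ℤ × ℤ)}
    (hF : MaxCommFamily i a b F) {x y : ℤ} (hxy : (x, y) ∈ F)
    (he : IsEffectiveEnd i a b F x y x) (hlt : x < y) {u v : ℤ} (huv : (u, v) ∈ F)
    (hu : u < x) {t0 : ℤ} (h1 : v < t0) (h2 : t0 ≤ y) (h3 : i t0 = i v) : False := by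
  obtain ⟨l, C, hl, hlo, hhi, hbx⟩ := exists_chain hab hF
  obtain ⟨k, hk1, hk2, hbk⟩ : ∃ k : ℕ, 1 ≤ k ∧ k ≤ l ∧ C.box k = (x, y) := by
    have : (x, y) ∈ boxesOf C := hbx ▸ hxy
    exact this
  obtain ⟨m, hm1, hm2, hbm⟩ : ∃ m : ℕ, 1 ≤ m ∧ m ≤ l ∧ C.box m = (u, v) := by
    have : (u, v) ∈ boxesOf C := hbx ▸ huv
    exact this
  have hD := he.2 l C hlo hhi hbx k hk1 hk2 hbk
  obtain ⟨hlok, hyhik⟩ := eff_lo C hk1 hk2 hbk hlt hD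
  have hkm : k < m := by
    by_contra h
    push_neg at h
    have hmono := chain_mono C hm1 h hk2
    have hbmm := box_mem C hm1 hm2
    have hbmm1 : C.lo m ≤ u := by rw [hbm] at hbmm; exact hbmm.1
    omega
  have hhim : C.hi k ≤ C.hi m := (chain_mono C hk1 hkm.le hm2).2
  rcases C.box_spec m hm1 hm2 with hL | hR
  · have hgap : ∀ t : ℤ, v < t → t ≤ C.hi m → i t ≠ i (C.lo m) := by
      rw [hbm] at hL; exact hL.2.2.2.2
    have hL1 : u = C.lo m := by rw [hbm] at hL; exact hL.1
    have hiv : i u = i v := (hF.1.1 _ huv).2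
    exact hgap t0 h1 (by omega) (by rw [← hL1, hiv]; exact h3)
  · have hR1 : v = C.hi m := by rw [hbm] at hR; exact hR.1
    omega

/-- If `[x,y] ∈ F` has effective end `x` and `[x(j)⁺, y'] ∈ F`, then `[x(j)⁺, y''] ∈ F` with
effective end `y''` for every `y''` of color `j` with `y' < y'' < y`. -/
theorem boxes_between (i : ℤ → I) (a b : ℤ) (hab : a ≤ b)
    (F : Set (ℤ × ℤ)) (hF : MaxCommFamily i a b F) (j : I) (x y : ℤ)
    (hxy : (x, y) ∈ F) (he : IsEffectiveEnd i a b F x y x)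
    (x₁ : ℤ) (hx₁l : x ≤ x₁) (hx₁c : i x₁ = j)
    (hx₁m : ∀ t : ℤ, x ≤ t → t < x₁ → i t ≠ j)
    (y' : ℤ) (hy' : (x₁, y') ∈ F) :
    ∀ y'' : ℤ, i y'' = j → y' < y'' → y'' < y →
      (x₁, y'') ∈ F ∧ IsEffectiveEnd i a b F x₁ y'' y'' := by
  intro y'' hy''c hy''gt hy''lt
  have hbxy : IsBox i x y := hF.1.1 _ hxy
  have hbx1 : IsBox i x₁ y' := hF.1.1 _ hy'
  have hx1y' : x₁ ≤ y' := hbx1.1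
  have hxlty : x < y := by omega
  have hyb : y ≤ b := (hF.2.1 _ hxy).2
  have hax1 : a ≤ x₁ := (hF.2.1 _ hy').1
  have hcy'' : i y' = i y'' := by rw [hy''c, ← hx₁c]; exact hbx1.2.symm
  have key : ∀ p ∈ F, BoxCommute i x₁ y'' p.1 p.2 := by
    intro p hp
    have A : BoxCommute i x₁ y' p.1 p.2 := hF.1.2 _ hy' p hp
    rcases A with ⟨hbl, hga⟩ | ⟨hbl, hga⟩
    · refine Or.inl ⟨hbl, fun t ht1 ht2 => ?_⟩
      have := hga t (by omega) ht2
      rwa [hcy''] at this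
    · by_cases hv : y'' ≤ p.2
      · exact Or.inr ⟨hbl, fun t ht1 ht2 => absurd ht1 (by omega)⟩
      · push_neg at hv
        by_cases hu : x ≤ p.1
        · refine Or.inl ⟨fun t ht1 ht2 => ?_, fun t ht1 ht2 => absurd ht1 (by omega)⟩
          rw [hx₁c]
          exact hx₁m t (by omega) ht2
        · push_neg at hu
          by_cases hgap : gapAbove i p.2 y''
          · exact Or.inr ⟨hbl, hgap⟩
          · exfalso
            unfold gapAbove at hgap
            push_neg at hgap
            obtain ⟨t0, ht1, ht2, ht3⟩ := hgap
            have hp' : (p.1, p.2) ∈ F := by rw [Prod.mk.eta]; exact hp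
            exact bad_box hab hF hxy he hxlty hp' hu ht1 (by omega) ht3
  have hmem : (x₁, y'') ∈ F := by
    have hG := hF.2.2 (insert (x₁, y'') F) ?_ ?_ (Set.subset_insert _ _)
    · rw [hG]; exact Set.mem_insert _ _
    · constructor
      · rintro p (rfl | hp)
        · exact ⟨by omega, by rw [hx₁c, hy''c]⟩
        · exact hF.1.1 p hp
      · intro p hp q hq
        rcases hp with rfl | hp
        · rcases hq with rfl | hq
          · exact Or.inl ⟨fun t ht1 ht2 => absurd ht2 (by omega),
              fun t ht1 ht2 => absurd ht1 (by omega)⟩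
          · exact key q hq
        · rcases hq with rfl | hq
          · exact boxCommute_symm (key p hp)
          · exact hF.1.2 p hp q hq
    · rintro p (rfl | hp)
      · exact ⟨hax1, by omega⟩
      · exact hF.2.1 p hp
  refine ⟨hmem, Or.inr rfl, ?_⟩
  intro l C hlo hhi hbx k' hk1 hk2 hbk'
  have hy'C : (x₁, y') ∈ boxesOf C := by rw [hbx]; exact hy'
  obtain ⟨m', hm1, hm2, hbm'⟩ := hy'C
  rcases newpt C hk1 hk2 with hD | hD
  · exfalso
    have hDx : env C k' \ env C (k'-1) = {x₁} := by rw [hD, hbk']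
    have hx1notin : x₁ ∉ env C (k'-1) := by
      have hx1mem : x₁ ∈ env C k' \ env C (k'-1) := by rw [hDx]; exact rfl
      exact hx1mem.2
    have hne : m' ≠ k' := by
      intro h
      rw [h, hbk'] at hbm'
      have h2 : x₁ = x₁ ∧ y'' = y' := Prod.mk.injEq .. ▸ hbm'
      omega
    rcases lt_or_gt_of_ne hne with hlt' | hgt'
    · have hx1in : x₁ ∈ env C m' := box_in_env C hm1 hm2
        (by rw [hbm']; exact Set.mem_Icc.mpr ⟨le_rfl, hx1y'⟩)
      exact hx1notin (env_mono C (by omega) (by omega) hx1in)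
    · have hsub : env C k' ⊆ env C (m'-1) := env_mono C (by omega) (by omega)
      have hx1k : x₁ ∈ env C k' := box_in_env C hk1 hk2
        (by rw [hbk']; exact Set.mem_Icc.mpr ⟨le_rfl, by omega⟩)
      have hy'k : y' ∈ env C k' := box_in_env C hk1 hk2
        (by rw [hbk']; exact Set.mem_Icc.mpr ⟨hx1y', by omega⟩)
      rcases newpt C hm1 hm2 with hD' | hD'
      · have hmm : (C.box m').1 ∈ env C m' \ env C (m'-1) := by rw [hD']; exact rfl
        rw [hbm'] at hmm
        exact hmm.2 (hsub hx1k)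
      · have hmm : (C.box m').2 ∈ env C m' \ env C (m'-1) := by rw [hD']; exact rfl
        rw [hbm'] at hmm
        exact hmm.2 (hsub hy'k)
  · rw [hbk'] at hD
    exact hD.symm

end IBoxes
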